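/- Let X ∈ ℝ^{n×d} be a matrix with columns X₁, …, X_d. For every β ∈ ℝᵈ and every integer s with 1 ≤ s ≤ d, there exists an s-sparse vector β′ ∈ ℝᵈ such that ‖Xβ − Xβ′‖₂ ≤ (2 max{‖X₁‖₂, …, ‖X_d‖₂} / √s) · ‖β‖₁. -/

import Mathlib

noncomputable def l2 {ι : Type*} [Fintype ι] (v : ι → ℝ) : ℝ :=
  Real.sqrt (∑ j, (v j)^2)

noncomputable def l1 {ι : Type*} [Fintype ι] (v : ι → ℝ) : ℝ := ∑ j, |v j|

def sparse {ι : Type*} (s : ℕ) (v : ι → ℝ) : Prop :=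
  ∃ T : Finset ι, T.card ≤ s ∧ ∀ j ∉ T, v j = 0

/-!
Write `Xβ = ∑ⱼ βⱼ Xⱼ` as the convex combination of the points `uⱼ = ±‖β‖₁ Xⱼ` with weights
`|βⱼ| / ‖β‖₁`; every `uⱼ` lies within `R = 2 ‖β‖₁ maxⱼ ‖Xⱼ‖` of `Xβ`. Choose points `uⱼ` one
at a time, tracking the sum `S` of their displacements `uⱼ - Xβ`: these average to zero, so the
weighted mean of `‖S + (uⱼ - Xβ)‖²` is at most `‖S‖² + R²`, and some choice of `j` does no
worse. After `s` steps the average of the chosen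
points is within `R / √s` of `Xβ`, and it is `Xβ'` for an `s`-sparse `β'`.
-/

open Finset

section Maurey

variable {E : Type*} [NormedAddCommGroup E] [InnerProductSpace ℝ E]
  {ι : Type*} [Fintype ι] {w : ι → ℝ}

lemma exists_le_sum_mul (hw : ∀ j, 0 ≤ w j) (hw1 : ∑ j, w j = 1) (a : ι → ℝ) :
    ∃ j, a j ≤ ∑ j, w j * a j := by
  obtain ⟨j, -, hj⟩ := (concaveOn_id convex_univ).exists_le_of_centerMass (t := univ)
    (fun j _ => hw j) (by rw [hw1]; exact one_pos) (fun j _ => Set.mem_univ (a j))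
  exact ⟨j, by simpa [centerMass_eq_of_sum_1 _ _ hw1] using hj⟩

lemma sum_mul_norm_add_sq (hw1 : ∑ j, w j = 1) {v : ι → E} (hv : ∑ j, w j • v j = 0) (y : E) :
    ∑ j, w j * ‖y + v j‖ ^ 2 = ‖y‖ ^ 2 + ∑ j, w j * ‖v j‖ ^ 2 := by
  have hcross : ∑ j, w j * (2 * inner ℝ y (v j)) = 0 := by
    simp_rw [mul_left_comm (w _), ← real_inner_smul_right]
    rw [← inner_sum, ← smul_sum, hv, smul_zero, inner_zero_right]
  simp_rw [norm_add_sq_real, mul_add, sum_add_distrib, hcross, ← sum_mul, hw1]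
  ring

lemma exists_norm_sum_comp_sq_le (hw : ∀ j, 0 ≤ w j) (hw1 : ∑ j, w j = 1) {v : ι → E}
    (hv : ∑ j, w j • v j = 0) {M : ℝ} (hM : ∀ j, ‖v j‖ ^ 2 ≤ M) (k : ℕ) :
    ∃ f : Fin k → ι, ‖∑ i, v (f i)‖ ^ 2 ≤ k * M := by
  induction k with
  | zero => exact ⟨Fin.elim0, by simp⟩
  | succ k ih =>
    obtain ⟨f, hf⟩ := ih
    obtain ⟨j, hj⟩ := exists_le_sum_mul hw hw1 fun j => ‖∑ i, v (f i) + v j‖ ^ 2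
    have hmean : ∑ j, w j * ‖v j‖ ^ 2 ≤ M := calc
      ∑ j, w j * ‖v j‖ ^ 2 ≤ ∑ j, w j * M :=
        sum_le_sum fun j _ => mul_le_mul_of_nonneg_left (hM j) (hw j)
      _ = M := by rw [← sum_mul, hw1, one_mul]
    refine ⟨Fin.snoc f j, ?_⟩
    rw [Fin.sum_univ_castSucc]
    simp only [Fin.snoc_castSucc, Fin.snoc_last]
    rw [sum_mul_norm_add_sq hw1 hv] at hj
    push_cast
    linarith

/-- Maurey's lemma (approximate Carathéodory), derandomized. -/
theorem exists_norm_average_sub_le (hw : ∀ j, 0 ≤ w j) (hw1 : ∑ j, w j = 1) {u : ι → E}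
    {R : ℝ} (hR : ∀ j, ‖u j - ∑ j, w j • u j‖ ≤ R) {k : ℕ} (hk : k ≠ 0) :
    ∃ f : Fin k → ι, ‖(k : ℝ)⁻¹ • ∑ i, u (f i) - ∑ j, w j • u j‖ ≤ R / √k := by
  set x := ∑ j, w j • u j
  have hmean : ∑ j, w j • (u j - x) = 0 := by
    simp only [smul_sub, sum_sub_distrib, ← sum_smul, hw1, one_smul, x, sub_self]
  obtain ⟨j₀⟩ : Nonempty ι := by
    by_contra! h
    simp at hw1
  have hR0 : 0 ≤ R := (norm_nonneg _).trans (hR j₀)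
  obtain ⟨f, hf⟩ := exists_norm_sum_comp_sq_le hw hw1 hmean
    (fun j => pow_le_pow_left₀ (norm_nonneg _) (hR j) 2) k
  have hk' : (0 : ℝ) < k := by positivity
  refine ⟨f, ?_⟩
  have hsum : (k : ℝ)⁻¹ • ∑ i, u (f i) - x = (k : ℝ)⁻¹ • ∑ i, (u (f i) - x) := by
    rw [sum_sub_distrib, sum_const, card_univ, Fintype.card_fin, smul_sub,
      ← Nat.cast_smul_eq_nsmul ℝ, inv_smul_smul₀ hk'.ne']
  rw [hsum, norm_smul, norm_inv, Real.norm_natCast, inv_mul_le_iff₀ hk']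
  calc ‖∑ i, (u (f i) - x)‖ ≤ √(k * R ^ 2) := Real.le_sqrt_of_sq_le hf
    _ = k * (R / √k) := by
      rw [Real.sqrt_mul hk'.le, Real.sqrt_sq hR0]
      field_simp
      rw [Real.sq_sqrt hk'.le, mul_comm]

end Maurey

section Sparse

variable {ι : Type*} [DecidableEq ι] {k : ℕ}

lemma sparse_smul_sum_single (a : ℝ) (f : Fin k → ι) (c : Fin k → ℝ) :
    sparse k (a • ∑ i, Pi.single (f i) (c i)) := by
  refine ⟨univ.image f, card_image_le.trans (by simp), fun j hj => ?_⟩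
  simp only [Pi.smul_apply, Finset.sum_apply, smul_eq_mul]
  rw [sum_eq_zero fun i _ => ?_, mul_zero]
  exact Pi.single_eq_of_ne (fun h => hj (mem_image.mpr ⟨i, mem_univ i, h.symm⟩)) _

lemma sum_sum_single_smul [Fintype ι] {R M : Type*} [Semiring R] [AddCommMonoid M] [Module R M]
    (f : Fin k → ι) (c : Fin k → R) (v : ι → M) :
    ∑ j, (∑ i, Pi.single (f i) (c i) : ι → R) j • v j = ∑ i, c i • v (f i) := by
  simp only [Finset.sum_apply, sum_smul]
  rw [sum_comm]
  simp [Pi.single_apply, ite_smul]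

end Sparse

lemma norm_sum_smul_le_l1_mul {E : Type*} [SeminormedAddCommGroup E] [NormedSpace ℝ E]
    {ι : Type*} [Fintype ι] {v : ι → E} {D : ℝ} (hv : ∀ j, ‖v j‖ ≤ D) (β : ι → ℝ) :
    ‖∑ j, β j • v j‖ ≤ l1 β * D := calc
  ‖∑ j, β j • v j‖ ≤ ∑ j, |β j| * ‖v j‖ := by
    simpa only [norm_smul, Real.norm_eq_abs] using norm_sum_le univ fun j => β j • v j
  _ ≤ l1 β * D := by
    rw [l1, sum_mul]
    exact sum_le_sum fun j _ => mul_le_mul_of_nonneg_left (hv j) (abs_nonneg _)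

lemma l2_eq_norm_toLp {ι : Type*} [Fintype ι] (v : ι → ℝ) : l2 v = ‖WithLp.toLp 2 v‖ := by
  simp [l2, EuclideanSpace.norm_eq]

lemma toLp_mulVec {m n : Type*} [Fintype n] (X : Matrix m n ℝ) (β : n → ℝ) :
    WithLp.toLp 2 (X.mulVec β) = ∑ j, β j • WithLp.toLp 2 (X.col j) := by
  simp [Matrix.mulVec_eq_sum, WithLp.toLp_sum, Matrix.col_def]

lemma l1_nonneg {ι : Type*} [Fintype ι] (β : ι → ℝ) : 0 ≤ l1 β :=
  sum_nonneg fun j _ => abs_nonneg (β j)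

lemma eq_zero_of_l1_eq_zero {ι : Type*} [Fintype ι] {β : ι → ℝ} (h : l1 β = 0) : β = 0 :=
  funext fun j => abs_eq_zero.mp <|
    (sum_eq_zero_iff_of_nonneg fun j _ => abs_nonneg (β j)).mp h j (mem_univ j)

theorem exists_sparse_norm_sum_smul_sub_le {E : Type*} [NormedAddCommGroup E]
    [InnerProductSpace ℝ E] {ι : Type*} [Fintype ι] {v : ι → E} {D : ℝ} (hv : ∀ j, ‖v j‖ ≤ D)
    (β : ι → ℝ) {k : ℕ} (hk : k ≠ 0) :
    ∃ β' : ι → ℝ, sparse k β' ∧ ‖∑ j, β j • v j - ∑ j, β' j • v j‖ ≤ 2 * D / √k * l1 β := by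
  classical
  rcases (l1_nonneg β).eq_or_lt with hB | hB
  · obtain rfl := eq_zero_of_l1_eq_zero hB.symm
    exact ⟨0, ⟨∅, by simp, fun _ _ => rfl⟩, by simp [l1]⟩
  set B := l1 β
  set w : ι → ℝ := fun j => |β j| / B
  set u : ι → E := fun j => (B * SignType.sign (β j)) • v j
  have hw1 : ∑ j, w j = 1 := by rw [← sum_div]; exact div_self hB.ne'
  have hwu : ∑ j, w j • u j = ∑ j, β j • v j := sum_congr rfl fun j _ => by
    simp only [w, u, smul_smul]
    rw [← mul_assoc, div_mul_cancel₀ _ hB.ne', abs_mul_sign]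
  have hu : ∀ j, ‖u j‖ ≤ B * D := fun j => by
    have hsign : |(SignType.sign (β j) : ℝ)| ≤ 1 := by
      rcases lt_trichotomy (β j) 0 with h | h | h <;> simp [h]
    rw [norm_smul, Real.norm_eq_abs, abs_mul, abs_of_pos hB]
    calc B * |(SignType.sign (β j) : ℝ)| * ‖v j‖ ≤ B * 1 * D := by gcongr; exact hv j
      _ = B * D := by ring
  have hR : ∀ j, ‖u j - ∑ j, w j • u j‖ ≤ 2 * B * D := fun j => calc
    ‖u j - ∑ j, w j • u j‖ ≤ ‖u j‖ + ‖∑ j, β j • v j‖ := hwu ▸ norm_sub_le _ _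
    _ ≤ B * D + B * D := add_le_add (hu j) (norm_sum_smul_le_l1_mul hv β)
    _ = 2 * B * D := by ring
  obtain ⟨f, hf⟩ :=
    exists_norm_average_sub_le (fun j => div_nonneg (abs_nonneg _) hB.le) hw1 hR hk
  set β' := (k : ℝ)⁻¹ • ∑ i, Pi.single (f i) (B * SignType.sign (β (f i)))
  have hβ' : ∑ j, β' j • v j = (k : ℝ)⁻¹ • ∑ i, u (f i) := by
    simp_rw [β', Pi.smul_apply, smul_eq_mul, mul_smul, ← smul_sum]
    rw [sum_sum_single_smul]
  refine ⟨β', sparse_smul_sum_single _ f _, ?_⟩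
  rw [hβ', ← norm_neg, neg_sub, ← hwu]
  calc _ ≤ 2 * B * D / √k := hf
    _ = 2 * D / √k * B := by ring

theorem sparsification_l1_general {n d : ℕ} (X : Matrix (Fin n) (Fin d) ℝ) (β : Fin d → ℝ)
    (s : ℕ) (hs1 : 1 ≤ s) :
    ∃ β' : Fin d → ℝ, sparse s β' ∧
      l2 (X.mulVec β - X.mulVec β') ≤
        2 * (⨆ j : Fin d, l2 (fun i => X i j)) / Real.sqrt s * l1 β := by
  have hcol : ∀ j, ‖WithLp.toLp 2 (X.col j)‖ ≤ ⨆ j : Fin d, l2 (fun i => X i j) := fun j => by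
    rw [← l2_eq_norm_toLp]
    exact le_ciSup (Set.finite_range fun j : Fin d => l2 fun i => X i j).bddAbove j
  obtain ⟨β', hsparse, hle⟩ := exists_sparse_norm_sum_smul_sub_le hcol β (by omega : s ≠ 0)
  refine ⟨β', hsparse, ?_⟩
  rwa [l2_eq_norm_toLp, WithLp.toLp_sub, toLp_mulVec, toLp_mulVec]

/-- Sparsification with ℓ₁-norm error. -/
theorem sparsification_l1 {n d : ℕ} (X : Matrix (Fin n) (Fin d) ℝ) (β : Fin d → ℝ)
    (s : ℕ) (hs1 : 1 ≤ s) (hsd : s ≤ d) :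
    ∃ β' : Fin d → ℝ, sparse s β' ∧
      l2 (X.mulVec β - X.mulVec β') ≤
        2 * (⨆ j : Fin d, l2 (fun i => X i j)) / Real.sqrt s * l1 β :=
  sparsification_l1_general X β s hs1
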